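/- For ε ∈ (0,1) and ξ ∈ ℝ^n with ε-norm ν = ‖ξ‖_ε, the decomposition ξ = S_{(1-ε)ν}(ξ) + (ξ - S_{(1-ε)ν}(ξ)) satisfies ‖S_{(1-ε)ν}(ξ)‖₂ = εν and ‖ξ - S_{(1-ε)ν}(ξ)‖_∞ ≤ (1-ε)ν, and this is the unique decomposition ξ = x + y with ‖x‖₂ ≤ εν and ‖y‖_∞ ≤ (1-ε)ν. -/

import Mathlib

/-!
Write `s = S_β(ξ)` with `β = (1 - ε)ν`. Coordinatewise, `s_i` is `ξ_i` shifted towards `0` by `β`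
and clipped at `0`, so `|ξ_i - s_i| ≤ β` and `|s_i| = (|ξ_i| - β)_+`; the defining equation of the
ε-norm then reads `‖s‖₂ = εν`. For uniqueness, if `ξ = x + y` with `‖y‖_∞ ≤ β`, then
`|ξ_i - x_i| ≤ β` makes `x_i - s_i` have the sign of `s_i` whenever `s_i ≠ 0`, so
`⟪x - s, s⟫ ≥ 0`. Hence `‖x‖² ≥ ‖s‖² + ‖x - s‖²`, and `‖x‖ ≤ εν = ‖s‖` forces `x = s`.
-/

/-- Soft-thresholding: `S_β(ξ)_i = sign(ξ_i) · max(|ξ_i| - β, 0)`. -/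
noncomputable def softThreshold (n : ℕ) (β : ℝ) (ξ : EuclideanSpace ℝ (Fin n)) :
    EuclideanSpace ℝ (Fin n) := WithLp.toLp 2 (fun i => Real.sign (ξ i) * max (|ξ i| - β) 0)

theorem eq_of_norm_le_of_inner_sub_nonneg {F : Type*} [NormedAddCommGroup F]
    [InnerProductSpace ℝ F] {x s : F} (hnorm : ‖x‖ ≤ ‖s‖) (hinner : 0 ≤ inner ℝ (x - s) s) :
    x = s := by
  have hexpand : ‖x‖ ^ 2 = ‖x - s‖ ^ 2 + 2 * inner ℝ (x - s) s + ‖s‖ ^ 2 := by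
    simpa using norm_add_sq_real (x - s) s
  have hsq : ‖x‖ ^ 2 ≤ ‖s‖ ^ 2 := pow_le_pow_left₀ (norm_nonneg x) hnorm 2
  have : ‖x - s‖ ^ 2 ≤ 0 := by linarith
  exact sub_eq_zero.mp (norm_eq_zero.mp (pow_eq_zero_iff two_ne_zero |>.mp
    (le_antisymm this (sq_nonneg _))))

namespace softThreshold

variable {n : ℕ} {β : ℝ}

theorem apply (ξ : EuclideanSpace ℝ (Fin n)) (i : Fin n) :
    softThreshold n β ξ i = Real.sign (ξ i) * max (|ξ i| - β) 0 :=
  rfl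

theorem apply_cases (hβ : 0 ≤ β) (ξ : EuclideanSpace ℝ (Fin n)) (i : Fin n) :
    (β ≤ ξ i ∧ softThreshold n β ξ i = ξ i - β) ∨
      (ξ i ≤ -β ∧ softThreshold n β ξ i = ξ i + β) ∨
      (|ξ i| ≤ β ∧ softThreshold n β ξ i = 0) := by
  rw [apply]
  rcases le_or_gt (|ξ i|) β with hsmall | hlarge
  · exact Or.inr <| Or.inr ⟨hsmall, by rw [max_eq_right (by linarith), mul_zero]⟩
  rw [max_eq_left (by linarith)]
  rcases lt_or_gt_of_ne (show ξ i ≠ 0 by rintro h; simp [h] at hlarge; linarith) with hneg | hpos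
  · rw [abs_of_neg hneg] at hlarge ⊢
    exact Or.inr <| Or.inl ⟨by linarith, by rw [Real.sign_of_neg hneg]; ring⟩
  · rw [abs_of_pos hpos] at hlarge ⊢
    exact Or.inl ⟨hlarge.le, by rw [Real.sign_of_pos hpos]; ring⟩

theorem abs_apply (hβ : 0 ≤ β) (ξ : EuclideanSpace ℝ (Fin n)) (i : Fin n) :
    |softThreshold n β ξ i| = max (|ξ i| - β) 0 := by
  rcases apply_cases hβ ξ i with ⟨h, hs⟩ | ⟨h, hs⟩ | ⟨h, hs⟩ <;> rw [hs]
  · rw [abs_of_nonneg (by linarith), abs_of_nonneg (by linarith), max_eq_left (by linarith)]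
  · rw [abs_of_nonpos (by linarith), abs_of_nonpos (by linarith), max_eq_left (by linarith)]
    ring
  · rw [abs_zero, max_eq_right (by linarith)]

theorem abs_sub_apply_le (hβ : 0 ≤ β) (ξ : EuclideanSpace ℝ (Fin n)) (i : Fin n) :
    |(ξ - softThreshold n β ξ) i| ≤ β := by
  rw [PiLp.sub_apply]
  rcases apply_cases hβ ξ i with ⟨_, hs⟩ | ⟨_, hs⟩ | ⟨h, hs⟩ <;> rw [hs]
  · simp [abs_of_nonneg hβ]
  · simp [abs_of_nonneg hβ]
  · simpa using h

theorem norm_sq (hβ : 0 ≤ β) (ξ : EuclideanSpace ℝ (Fin n)) :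
    ‖softThreshold n β ξ‖ ^ 2 = ∑ i, max (|ξ i| - β) 0 ^ 2 := by
  simp only [EuclideanSpace.norm_sq_eq, Real.norm_eq_abs, abs_apply hβ]

/-- The variational inequality characterising `S_β(ξ)` as the point of the box
`{x | ∀ i, |ξ_i - x_i| ≤ β}` closest to the origin. -/
theorem inner_sub_nonneg (hβ : 0 ≤ β) (ξ x : EuclideanSpace ℝ (Fin n))
    (hx : ∀ i, |(ξ - x) i| ≤ β) :
    0 ≤ inner ℝ (x - softThreshold n β ξ) (softThreshold n β ξ) := by
  rw [PiLp.inner_apply]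
  refine Finset.sum_nonneg fun i _ => ?_
  have hxi := abs_le.mp (hx i)
  simp only [PiLp.sub_apply] at hxi ⊢
  rw [real_inner_comm, RCLike.inner_apply, conj_trivial]
  rcases apply_cases hβ ξ i with ⟨h, hs⟩ | ⟨h, hs⟩ | ⟨_, hs⟩ <;> rw [hs]
  · exact mul_nonneg (by linarith) (by linarith)
  · exact mul_nonneg_of_nonpos_of_nonpos (by linarith) (by linarith)
  · simp

end softThreshold

theorem stmt_4 (n : ℕ) (ε : ℝ) (hε : ε ∈ Set.Ioo (0:ℝ) 1)
    (ξ : EuclideanSpace ℝ (Fin n)) (ν : ℝ) (hν : 0 < ν)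
    (hdef : ∑ i, (max (|ξ i| - (1 - ε) * ν) 0) ^ 2 = (ε * ν) ^ 2) :
    ‖softThreshold n ((1 - ε) * ν) ξ‖ = ε * ν ∧
    (∀ i, |(ξ - softThreshold n ((1 - ε) * ν) ξ) i| ≤ (1 - ε) * ν) ∧
    (∀ x y : EuclideanSpace ℝ (Fin n),
      ξ = x + y → ‖x‖ ≤ ε * ν → (∀ i, |y i| ≤ (1 - ε) * ν) →
        x = softThreshold n ((1 - ε) * ν) ξ ∧
        y = ξ - softThreshold n ((1 - ε) * ν) ξ) := by
  obtain ⟨hε0, hε1⟩ := hε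
  have hβ : 0 ≤ (1 - ε) * ν := mul_nonneg (by linarith) hν.le
  have hnorm : ‖softThreshold n ((1 - ε) * ν) ξ‖ = ε * ν := by
    rw [← sq_eq_sq₀ (norm_nonneg _) (mul_pos hε0 hν).le, softThreshold.norm_sq hβ, hdef]
  refine ⟨hnorm, softThreshold.abs_sub_apply_le hβ ξ, fun x y hxy hx hy => ?_⟩
  have hyx : y = ξ - x := by rw [hxy, add_sub_cancel_left]
  have hxs : x = softThreshold n ((1 - ε) * ν) ξ :=
    eq_of_norm_le_of_inner_sub_nonneg (hnorm ▸ hx)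
      (softThreshold.inner_sub_nonneg hβ ξ x (hyx ▸ hy))
  exact ⟨hxs, hxs ▸ hyx⟩
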